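/- (Theorem 3, doubly robust representation: mean-zero property of the efficient influence function.) Under the sensitivity parametrization, with w1(X) = e(X) + (1−e(X))/ε1(X) and w0(X) = e(X)·ε0(X) + 1 − e(X), the average causal effect admits the representation τ = E[ w1(X)·Z·Y/e(X) − (Z−e(X))·μ1(X)/(e(X)·ε1(X)) ] − E[ w0(X)·(1−Z)·Y/(1−e(X)) − (e(X)−Z)·μ0(X)·ε0(X)/(1−e(X)) ]. -/

import Mathlib

/-! Split the score `A` of an arm as `W A + (1 - W) A`. Given `X`, the treated part has mean
`μ e` and the untreated part `(μ / ε) (1 - e)`; by the sensitivity relation these are exactly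
`E[W Y' | X]` and `E[(1 - W) Y' | X]`. Neither `1 / e` nor `1 / ε` is assumed integrable, so the
treated part is written as `g · W (Y' - c)` with an `X`-measurable weight `g ≥ 1`: this makes
`W (Y' - c)` integrable and lets `g` be pulled out of the conditional expectation. The control arm
is the treated arm for `1 - Z`, `1 - e` and `1 / ε₀`. -/

open MeasureTheory

namespace MeasureTheory

variable {Ω : Type*} {m m₀ : MeasurableSpace Ω} {P : Measure[m₀] Ω}

theorem integral_mul_eq_integral_mul_condExp (hm : m ≤ m₀) [SigmaFinite (P.trim hm)]
    {f g : Ω → ℝ} (hf : StronglyMeasurable[m] f) (hfg : Integrable (f * g) P)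
    (hg : Integrable g P) : ∫ ω, f ω * g ω ∂P = ∫ ω, f ω * P[g|m] ω ∂P :=
  (integral_condExp hm).symm.trans
    (integral_congr_ae (condExp_mul_of_stronglyMeasurable_left hf hfg hg))

theorem condExp_one_sub (hm : m ≤ m₀) [IsFiniteMeasure P] {f : Ω → ℝ} (hf : Integrable f P) :
    P[fun ω => 1 - f ω|m] =ᵐ[P] fun ω => 1 - P[f|m] ω := by
  have h := condExp_sub (integrable_const (1 : ℝ)) hf m
  rw [condExp_const hm] at h
  exact h

theorem Integrable.zero_or_one_mul {W f : Ω → ℝ} (hf : Integrable f P) (hW : Measurable W)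
    (hW01 : ∀ ω, W ω = 0 ∨ W ω = 1) : Integrable (fun ω => W ω * f ω) P :=
  hf.bdd_mul (c := 1) hW.aestronglyMeasurable
    (ae_of_all _ fun ω => by rcases hW01 ω with h | h <;> simp [h])

theorem one_sub_eq_zero_or_one {W : Ω → ℝ} (hW01 : ∀ ω, W ω = 0 ∨ W ω = 1) :
    ∀ ω, 1 - W ω = 0 ∨ 1 - W ω = 1 := fun ω => by
  rcases hW01 ω with h | h <;> simp [h]

theorem integrable_of_zero_or_one [IsFiniteMeasure P] {W : Ω → ℝ} (hW : Measurable W)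
    (hW01 : ∀ ω, W ω = 0 ∨ W ω = 1) : Integrable W P := by
  simpa using (integrable_const (1 : ℝ)).zero_or_one_mul hW hW01

theorem condExp_zero_or_one_mul_sub [IsFiniteMeasure P] {W Y c : Ω → ℝ} (hW : Measurable W)
    (hW01 : ∀ ω, W ω = 0 ∨ W ω = 1) (hY : Integrable Y P) (hc : StronglyMeasurable[m] c)
    (hWc : Integrable (fun ω => W ω * (Y ω - c ω)) P) :
    P[fun ω => W ω * (Y ω - c ω)|m]
      =ᵐ[P] fun ω => P[fun ω => W ω * Y ω|m] ω - c ω * P[W|m] ω := by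
  have hWY := hY.zero_or_one_mul hW hW01
  have hcW : Integrable (c * W) P :=
    (hWY.sub hWc).congr (ae_of_all _ fun ω => by simp only [Pi.sub_apply, Pi.mul_apply]; ring)
  rw [show (fun ω => W ω * (Y ω - c ω)) = (fun ω => W ω * Y ω) - c * W by
    ext ω; simp only [Pi.sub_apply, Pi.mul_apply]; ring]
  filter_upwards [condExp_sub hWY hcW m,
    condExp_mul_of_stronglyMeasurable_left hc hcW (integrable_of_zero_or_one hW hW01)]
    with ω h1 h2
  rw [h1, Pi.sub_apply, h2, Pi.mul_apply]

theorem Integrable.of_mul_of_one_le_left {f g : Ω → ℝ} (hgf : Integrable (fun ω => g ω * f ω) P)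
    (hf : AEStronglyMeasurable f P) (hg : ∀ᵐ ω ∂P, 1 ≤ g ω) : Integrable f P :=
  hgf.norm.mono' hf <| hg.mono fun ω hω => by
    rw [norm_mul]
    exact le_mul_of_one_le_left (norm_nonneg _) (hω.trans (le_abs_self _))

end MeasureTheory

/-- The paper's `w₁(X) Z Y / e(X) - (Z - e(X)) μ₁(X) / (e(X) ε₁(X))` for a treatment indicator `W`
with propensity `e`, sensitivity parameter `ε` and outcome regression `mu`. -/
noncomputable def doublyRobustScore {Ω : Type*} (e ε mu W Y : Ω → ℝ) (ω : Ω) : ℝ :=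
  (e ω + (1 - e ω) / ε ω) * (W ω * Y ω) / e ω - (W ω - e ω) * mu ω / (e ω * ε ω)

section

variable {Ω : Type*} {m m₀ : MeasurableSpace Ω} {P : Measure[m₀] Ω} [IsFiniteMeasure P]
  {W Y Y' e ε mu : Ω → ℝ}

theorem integral_treated_mul_doublyRobustScore (hm : m ≤ m₀) (hW : Measurable W)
    (hW01 : ∀ ω, W ω = 0 ∨ W ω = 1) (hY' : Integrable Y' P) (hWY : ∀ ω, W ω * Y ω = W ω * Y' ω)
    (he : Measurable[m] e) (heW : e =ᵐ[P] P[W|m]) (hov : ∀ᵐ ω ∂P, 0 < e ω ∧ e ω < 1)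
    (hmu : Measurable[m] mu) (hmuW : (fun ω => mu ω * e ω) =ᵐ[P] P[fun ω => W ω * Y' ω|m])
    (hε : Measurable[m] ε) (hε_pos : ∀ᵐ ω ∂P, 0 < ε ω)
    (hA : Integrable (doublyRobustScore e ε mu W Y) P) :
    ∫ ω, W ω * doublyRobustScore e ε mu W Y ω ∂P = ∫ ω, mu ω * e ω ∂P := by
  set g : Ω → ℝ := fun ω => (e ω + (1 - e ω) / ε ω) / e ω
  set c : Ω → ℝ := fun ω => (1 - e ω) * mu ω / (e ω * ε ω + (1 - e ω))
  have hc : Measurable[m] c :=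
    ((measurable_const.sub he).mul hmu).div ((he.mul hε).add (measurable_const.sub he))
  have hg : Measurable[m] g := (he.add ((measurable_const.sub he).div hε)).div he
  have hWA := hA.zero_or_one_mul hW hW01
  have hsplit : (fun ω => W ω * doublyRobustScore e ε mu W Y ω)
      =ᵐ[P] fun ω => g ω * (W ω * (Y' ω - c ω)) := by
    filter_upwards [hov, hε_pos] with ω ⟨he0, _⟩ hεω
    rcases hW01 ω with h | h
    · simp [doublyRobustScore, h]
    · have hy : Y ω = Y' ω := by simpa [h] using hWY ω
      have : e ω * ε ω + (1 - e ω) ≠ 0 := by nlinarith [mul_pos he0 hεω]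
      simp only [doublyRobustScore, g, c, h, hy]
      field_simp
  have hg_one_le : ∀ᵐ ω ∂P, 1 ≤ g ω := by
    filter_upwards [hov, hε_pos] with ω ⟨he0, he1⟩ hεω
    rw [le_div_iff₀ he0]
    linarith [div_pos (sub_pos.2 he1) hεω]
  have hWc : Integrable (fun ω => W ω * (Y' ω - c ω)) P :=
    (hWA.congr hsplit).of_mul_of_one_le_left
      (hW.aestronglyMeasurable.mul (hY'.1.sub (hc.mono hm le_rfl).aestronglyMeasurable))
      hg_one_le
  have hcond : P[fun ω => W ω * (Y' ω - c ω)|m] =ᵐ[P] fun ω => (mu ω - c ω) * e ω := by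
    filter_upwards [condExp_zero_or_one_mul_sub hW hW01 hY' hc.stronglyMeasurable hWc, hmuW, heW]
      with ω h1 h2 h3
    rw [h1, ← h2, ← h3]
    ring
  calc ∫ ω, W ω * doublyRobustScore e ε mu W Y ω ∂P
      = ∫ ω, g ω * (W ω * (Y' ω - c ω)) ∂P := integral_congr_ae hsplit
    _ = ∫ ω, g ω * P[fun ω => W ω * (Y' ω - c ω)|m] ω ∂P :=
      integral_mul_eq_integral_mul_condExp hm hg.stronglyMeasurable (hWA.congr hsplit) hWc
    _ = ∫ ω, mu ω * e ω ∂P := by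
      refine integral_congr_ae ?_
      filter_upwards [hcond, hov, hε_pos] with ω hω ⟨he0, _⟩ hεω
      have : e ω * ε ω + (1 - e ω) ≠ 0 := by nlinarith [mul_pos he0 hεω]
      simp only [hω, g, c]
      field_simp
      ring

theorem integral_untreated_mul_doublyRobustScore (hm : m ≤ m₀) (hW : Measurable W)
    (hW01 : ∀ ω, W ω = 0 ∨ W ω = 1) (heW : e =ᵐ[P] P[W|m]) (he0 : ∀ᵐ ω ∂P, e ω ≠ 0)
    (hmu : Measurable[m] mu) (hε : Measurable[m] ε)
    (hA : Integrable (doublyRobustScore e ε mu W Y) P) :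
    ∫ ω, (1 - W ω) * doublyRobustScore e ε mu W Y ω ∂P = ∫ ω, mu ω / ε ω * (1 - e ω) ∂P := by
  have hW1 := one_sub_eq_zero_or_one hW01
  have hsplit : (fun ω => (1 - W ω) * doublyRobustScore e ε mu W Y ω)
      =ᵐ[P] fun ω => mu ω / ε ω * (1 - W ω) := by
    filter_upwards [he0] with ω he0ω
    rcases hW01 ω with h | h
    · simp only [doublyRobustScore, h]
      field_simp
      ring
    · simp [h]
  have hW_int : Integrable W P := integrable_of_zero_or_one hW hW01
  calc ∫ ω, (1 - W ω) * doublyRobustScore e ε mu W Y ω ∂P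
      = ∫ ω, mu ω / ε ω * (1 - W ω) ∂P := integral_congr_ae hsplit
    _ = ∫ ω, mu ω / ε ω * P[fun ω => 1 - W ω|m] ω ∂P :=
      integral_mul_eq_integral_mul_condExp hm (hmu.div hε).stronglyMeasurable
        ((hA.zero_or_one_mul (W := fun ω => 1 - W ω) (measurable_const.sub hW) hW1).congr hsplit)
        ((integrable_const 1).sub hW_int)
    _ = ∫ ω, mu ω / ε ω * (1 - e ω) ∂P := by
      refine integral_congr_ae ?_
      filter_upwards [condExp_one_sub hm hW_int, heW] with ω h1 h2
      rw [h1, ← h2]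

theorem integral_eq_of_sensitivity (hm : m ≤ m₀) (hW : Measurable W)
    (hW01 : ∀ ω, W ω = 0 ∨ W ω = 1) (hY' : Integrable Y' P)
    (hmuW : (fun ω => mu ω * e ω) =ᵐ[P] P[fun ω => W ω * Y' ω|m])
    (hε_ne : ∀ᵐ ω ∂P, ε ω * e ω ≠ 0)
    (hsens : ∀ᵐ ω ∂P, (1 - e ω) * P[fun ω' => W ω' * Y' ω'|m] ω
        = ε ω * e ω * P[fun ω' => (1 - W ω') * Y' ω'|m] ω) :
    ∫ ω, Y' ω ∂P = ∫ ω, mu ω * e ω ∂P + ∫ ω, mu ω / ε ω * (1 - e ω) ∂P := by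
  have hW1 := one_sub_eq_zero_or_one hW01
  have hW1m : Measurable fun ω => 1 - W ω := measurable_const.sub hW
  have hcontrol : P[fun ω => (1 - W ω) * Y' ω|m] =ᵐ[P] fun ω => mu ω / ε ω * (1 - e ω) := by
    filter_upwards [hsens, hmuW, hε_ne] with ω hs hω hne
    have hε0 : ε ω ≠ 0 := left_ne_zero_of_mul hne
    rw [← hω] at hs
    apply mul_left_cancel₀ hne
    rw [← hs]
    field_simp
  calc ∫ ω, Y' ω ∂P = ∫ ω, (W ω * Y' ω + (1 - W ω) * Y' ω) ∂P := by congr 1; ext ω; ring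
    _ = ∫ ω, P[fun ω => W ω * Y' ω|m] ω ∂P + ∫ ω, P[fun ω => (1 - W ω) * Y' ω|m] ω ∂P := by
      rw [integral_add (hY'.zero_or_one_mul hW hW01) (hY'.zero_or_one_mul hW1m hW1),
        integral_condExp hm, integral_condExp hm]
    _ = ∫ ω, mu ω * e ω ∂P + ∫ ω, mu ω / ε ω * (1 - e ω) ∂P := by
      rw [integral_congr_ae hmuW.symm, integral_congr_ae hcontrol]

theorem integral_doublyRobustScore (hm : m ≤ m₀) (hW : Measurable W)
    (hW01 : ∀ ω, W ω = 0 ∨ W ω = 1) (hY' : Integrable Y' P) (hWY : ∀ ω, W ω * Y ω = W ω * Y' ω)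
    (he : Measurable[m] e) (heW : e =ᵐ[P] P[W|m]) (hov : ∀ᵐ ω ∂P, 0 < e ω ∧ e ω < 1)
    (hmu : Measurable[m] mu) (hmuW : (fun ω => mu ω * e ω) =ᵐ[P] P[fun ω => W ω * Y ω|m])
    (hε : Measurable[m] ε) (hε_pos : ∀ᵐ ω ∂P, 0 < ε ω)
    (hsens : ∀ᵐ ω ∂P, (1 - e ω) * P[fun ω' => W ω' * Y' ω'|m] ω
        = ε ω * e ω * P[fun ω' => (1 - W ω') * Y' ω'|m] ω)
    (hA : Integrable (doublyRobustScore e ε mu W Y) P) :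
    ∫ ω, doublyRobustScore e ε mu W Y ω ∂P = ∫ ω, Y' ω ∂P := by
  have hmuW' : (fun ω => mu ω * e ω) =ᵐ[P] P[fun ω => W ω * Y' ω|m] := by
    simpa only [hWY] using hmuW
  have hW1 := one_sub_eq_zero_or_one hW01
  have hW1m : Measurable fun ω => 1 - W ω := measurable_const.sub hW
  calc ∫ ω, doublyRobustScore e ε mu W Y ω ∂P
      = ∫ ω, W ω * doublyRobustScore e ε mu W Y ω ∂P
        + ∫ ω, (1 - W ω) * doublyRobustScore e ε mu W Y ω ∂P := by
        rw [← integral_add (hA.zero_or_one_mul hW hW01) (hA.zero_or_one_mul hW1m hW1)]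
        congr 1; ext ω; ring
    _ = ∫ ω, mu ω * e ω ∂P + ∫ ω, mu ω / ε ω * (1 - e ω) ∂P := by
      rw [integral_treated_mul_doublyRobustScore hm hW hW01 hY' hWY he heW hov hmu hmuW' hε
        hε_pos hA, integral_untreated_mul_doublyRobustScore hm hW hW01 heW
        (hov.mono fun ω h => h.1.ne') hmu hε hA]
    _ = ∫ ω, Y' ω ∂P := (integral_eq_of_sensitivity hm hW hW01 hY' hmuW'
        (by filter_upwards [hov, hε_pos] with ω h hεω; exact (mul_pos hεω h.1).ne') hsens).symm

theorem doublyRobustScore_one_sub (e ε mu W Y : Ω → ℝ) (ω : Ω) :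
    doublyRobustScore (fun ω => 1 - e ω) (fun ω => (ε ω)⁻¹) mu (fun ω => 1 - W ω) Y ω
      = (e ω * ε ω + 1 - e ω) * ((1 - W ω) * Y ω) / (1 - e ω)
        - (e ω - W ω) * (mu ω * ε ω) / (1 - e ω) := by
  unfold doublyRobustScore
  rcases eq_or_ne (1 - e ω) 0 with he | he
  · simp [he]
  rcases eq_or_ne (ε ω) 0 with hε | hε
  · simp [hε]
  field_simp
  ring

theorem integral_control_doublyRobustScore (hm : m ≤ m₀) (hW : Measurable W)
    (hW01 : ∀ ω, W ω = 0 ∨ W ω = 1) (hY' : Integrable Y' P)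
    (hWY : ∀ ω, (1 - W ω) * Y ω = (1 - W ω) * Y' ω)
    (he : Measurable[m] e) (heW : e =ᵐ[P] P[W|m]) (hov : ∀ᵐ ω ∂P, 0 < e ω ∧ e ω < 1)
    (hmu : Measurable[m] mu)
    (hmuW : (fun ω => mu ω * (1 - e ω)) =ᵐ[P] P[fun ω => (1 - W ω) * Y ω|m])
    (hε : Measurable[m] ε) (hε_pos : ∀ᵐ ω ∂P, 0 < ε ω)
    (hsens : ∀ᵐ ω ∂P, (1 - e ω) * P[fun ω' => W ω' * Y' ω'|m] ω
        = ε ω * e ω * P[fun ω' => (1 - W ω') * Y' ω'|m] ω)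
    (hA : Integrable (fun ω => (e ω * ε ω + 1 - e ω) * ((1 - W ω) * Y ω) / (1 - e ω)
        - (e ω - W ω) * (mu ω * ε ω) / (1 - e ω)) P) :
    ∫ ω, ((e ω * ε ω + 1 - e ω) * ((1 - W ω) * Y ω) / (1 - e ω)
        - (e ω - W ω) * (mu ω * ε ω) / (1 - e ω)) ∂P = ∫ ω, Y' ω ∂P := by
  rw [← funext (doublyRobustScore_one_sub e ε mu W Y)] at hA ⊢
  have hW_int : Integrable W P := integrable_of_zero_or_one hW hW01
  refine integral_doublyRobustScore hm (measurable_const.sub hW)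
    (one_sub_eq_zero_or_one hW01) hY' hWY (measurable_const.sub he) ?_ ?_
    hmu hmuW hε.inv (hε_pos.mono fun ω h => inv_pos.2 h) ?_ hA
  · filter_upwards [heW, condExp_one_sub hm hW_int] with ω h1 h2
    rw [h1, h2]
  · filter_upwards [hov] with ω ⟨he0, he1⟩
    constructor <;> linarith
  · simp only [sub_sub_cancel]
    filter_upwards [hsens, hε_pos] with ω hs hεω
    field_simp
    linarith

end

/-- Theorem 3 (doubly robust representation from the efficient influence function). -/
theorem doubly_robust_representation_ate
    {Ω : Type*} [F : MeasurableSpace Ω] (P : Measure Ω) [IsProbabilityMeasure P]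
    (Z Y1 Y0 Y : Ω → ℝ)
    (hZmeas : Measurable Z) (hZ01 : ∀ ω, Z ω = 0 ∨ Z ω = 1)
    (hY1int : Integrable Y1 P) (hY0int : Integrable Y0 P)
    (hYdef : ∀ ω, Y ω = Z ω * Y1 ω + (1 - Z ω) * Y0 ω)
    (mX : MeasurableSpace Ω) (hmX : mX ≤ F)
    (eX : Ω → ℝ) (heXmeas : Measurable[mX] eX) (heX : eX =ᵐ[P] P[Z|mX])
    (hov : ∀ᵐ ω ∂P, 0 < eX ω ∧ eX ω < 1)
    (mu1 mu0 : Ω → ℝ) (hmu1meas : Measurable[mX] mu1) (hmu0meas : Measurable[mX] mu0)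
    (hmu1 : (fun ω => mu1 ω * eX ω) =ᵐ[P] P[fun ω => Z ω * Y ω|mX])
    (hmu0 : (fun ω => mu0 ω * (1 - eX ω)) =ᵐ[P] P[fun ω => (1 - Z ω) * Y ω|mX])
    (eps1 eps0 : Ω → ℝ)
    (heps1meas : Measurable[mX] eps1) (heps0meas : Measurable[mX] eps0)
    (heps1pos : ∀ᵐ ω ∂P, 0 < eps1 ω) (heps0pos : ∀ᵐ ω ∂P, 0 < eps0 ω)
    (hsens1 : ∀ᵐ ω ∂P, (1 - eX ω) * (P[fun ω' => Z ω' * Y1 ω'|mX]) ω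
        = eps1 ω * eX ω * (P[fun ω' => (1 - Z ω') * Y1 ω'|mX]) ω)
    (hsens0 : ∀ᵐ ω ∂P, (1 - eX ω) * (P[fun ω' => Z ω' * Y0 ω'|mX]) ω
        = eps0 ω * eX ω * (P[fun ω' => (1 - Z ω') * Y0 ω'|mX]) ω)
    (hint1 : Integrable (fun ω =>
      (eX ω + (1 - eX ω) / eps1 ω) * (Z ω * Y ω) / eX ω
        - (Z ω - eX ω) * mu1 ω / (eX ω * eps1 ω)) P)
    (hint0 : Integrable (fun ω =>
      (eX ω * eps0 ω + 1 - eX ω) * ((1 - Z ω) * Y ω) / (1 - eX ω)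
        - (eX ω - Z ω) * (mu0 ω * eps0 ω) / (1 - eX ω)) P) :
    ∫ ω, Y1 ω ∂P - ∫ ω, Y0 ω ∂P
      = ∫ ω, ((eX ω + (1 - eX ω) / eps1 ω) * (Z ω * Y ω) / eX ω
            - (Z ω - eX ω) * mu1 ω / (eX ω * eps1 ω)) ∂P
        - ∫ ω, ((eX ω * eps0 ω + 1 - eX ω) * ((1 - Z ω) * Y ω) / (1 - eX ω)
            - (eX ω - Z ω) * (mu0 ω * eps0 ω) / (1 - eX ω)) ∂P := by
  have hZY1 : ∀ ω, Z ω * Y ω = Z ω * Y1 ω := fun ω => by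
    rcases hZ01 ω with h | h <;> simp [hYdef ω, h]
  have hZY0 : ∀ ω, (1 - Z ω) * Y ω = (1 - Z ω) * Y0 ω := fun ω => by
    rcases hZ01 ω with h | h <;> simp [hYdef ω, h]
  rw [← integral_doublyRobustScore hmX hZmeas hZ01 hY1int hZY1 heXmeas heX hov hmu1meas hmu1
      heps1meas heps1pos hsens1 hint1,
    integral_control_doublyRobustScore hmX hZmeas hZ01 hY0int hZY0 heXmeas heX hov hmu0meas hmu0
      heps0meas heps0pos hsens0 hint0]
  rfl
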